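/- Let A < 0, B > 0, C > 0 and define f_B(Q) = (A/2)tr Q² − (B/3)tr Q³ + (C/4)(tr Q²)² on symmetric traceless 3×3 matrices. Then f_B attains its minimum over S₀ exactly on the set of matrices Q = s₊(n⊗n − I/3) with n a unit vector, where s₊ = (B + √(B² + 24|A|C))/(4C). -/

import Mathlib

/-!
Write `tr Q² = 2s²/3` with `s ≥ 0`. For eigenvalues `λᵢ` summing to zero,
`(tr Q²)³/6 - (tr Q³)² = ((λ₁-λ₂)(λ₂-λ₃)(λ₃-λ₁))²/3`, so `tr Q³ ≤ 2s³/9`, with equality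
exactly when the spectrum is `(2s/3, -s/3, -s/3)`, i.e. when `Q = s (n ⊗ n - I/3)`. Since
`B > 0`, this gives `f_B(Q) ≥ A s²/3 - 2B s³/27 + C s⁴/9`, the value of `f_B` at the uniaxial
matrices of order parameter `s`; and this quartic has a strict minimum on `s ≥ 0` at its
positive critical point `s₊`.
-/

open Matrix

noncomputable section

abbrev Mat3 := Matrix (Fin 3) (Fin 3) ℝ

def S0 (Q : Mat3) : Prop := Q.IsSymm ∧ Q.trace = 0

def nsq (Q : Mat3) : ℝ := Matrix.trace (Q * Q)

def tr3 (Q : Mat3) : ℝ := Matrix.trace (Q * Q * Q)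

def unitVec (n : Fin 3 → ℝ) : Prop := ∑ i, (n i) ^ 2 = 1

def uni (s : ℝ) (n : Fin 3 → ℝ) : Mat3 :=
  s • (Matrix.vecMulVec n n - (1 / 3 : ℝ) • (1 : Mat3))

/-- The bulk potential `f_B(Q) = (A/2)tr Q² − (B/3)tr Q³ + (C/4)(tr Q²)²`. -/
def fB (A B C : ℝ) (Q : Mat3) : ℝ :=
  A / 2 * nsq Q - B / 3 * tr3 Q + C / 4 * (nsq Q) ^ 2

namespace Matrix.IsHermitian

variable {𝕜 n : Type*} [RCLike 𝕜] [Fintype n] [DecidableEq n] {A : Matrix n n 𝕜}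

theorem trace_pow_eq_sum_eigenvalues_pow (hA : A.IsHermitian) (k : ℕ) :
    (A ^ k).trace = ∑ i, (hA.eigenvalues i : 𝕜) ^ k := by
  conv_lhs => rw [hA.spectral_theorem, ← map_pow, Unitary.conjStarAlgAut_apply, trace_mul_cycle,
    Unitary.coe_star_mul_self, one_mul, diagonal_pow, trace_diagonal]
  rfl

theorem eq_smul_one_add_smul_vecMulVec (hA : A.IsHermitian) {i : n} {μ s : ℝ}
    (h : ∀ j, hA.eigenvalues j = μ + (Pi.single i s : n → ℝ) j) :
    A = (μ : 𝕜) • 1 + (s : 𝕜) •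
      vecMulVec ⇑(hA.eigenvectorBasis i) (star ⇑(hA.eigenvectorBasis i)) := by
  have hdiag : diagonal (RCLike.ofReal ∘ hA.eigenvalues) =
      (μ : 𝕜) • (1 : Matrix n n 𝕜) +
        (s : 𝕜) • vecMulVec (Pi.single i 1 : n → 𝕜) (Pi.single i 1) := by
    ext j k
    simp only [diagonal_apply, Function.comp_apply, h, add_apply, smul_apply, one_apply,
      vecMulVec_apply, Pi.single_apply, smul_eq_mul]
    split_ifs <;> simp_all
  conv_lhs => rw [hA.spectral_theorem, hdiag, Unitary.conjStarAlgAut_apply]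
  rw [mul_add, add_mul, mul_smul_comm, smul_mul_assoc, mul_one,
    Unitary.mul_star_self_of_mem hA.eigenvectorUnitary.2,
    mul_smul_comm, smul_mul_assoc, mul_vecMulVec, vecMulVec_mul, eigenvectorUnitary_mulVec,
    star_eq_conjTranspose, ← star_star (Pi.single i 1 : n → 𝕜), ← star_mulVec]
  simp

end Matrix.IsHermitian

section PowerSums

variable {x : Fin 3 → ℝ} {s : ℝ}

theorem sq_sum_cube_le_of_sum_eq_zero (h : ∑ i, x i = 0) :
    (∑ i, x i ^ 3) ^ 2 ≤ (∑ i, x i ^ 2) ^ 3 / 6 := by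
  simp only [Fin.sum_univ_three] at *
  have hx2 : x 2 = -x 0 - x 1 := by linarith
  have key : (x 0 ^ 2 + x 1 ^ 2 + x 2 ^ 2) ^ 3 / 6 - (x 0 ^ 3 + x 1 ^ 3 + x 2 ^ 3) ^ 2
      = ((x 0 - x 1) * (x 1 - x 2) * (x 2 - x 0)) ^ 2 / 3 := by
    rw [hx2]; ring
  linarith [sq_nonneg ((x 0 - x 1) * (x 1 - x 2) * (x 2 - x 0))]

theorem sum_cube_le_of_sum_eq_zero (h : ∑ i, x i = 0) (hs : 0 ≤ s)
    (h2 : ∑ i, x i ^ 2 = 2 * s ^ 2 / 3) : ∑ i, x i ^ 3 ≤ 2 * s ^ 3 / 9 := by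
  refine le_of_sq_le_sq ?_ (by positivity)
  calc (∑ i, x i ^ 3) ^ 2 ≤ (∑ i, x i ^ 2) ^ 3 / 6 := sq_sum_cube_le_of_sum_eq_zero h
    _ = (2 * s ^ 3 / 9) ^ 2 := by rw [h2]; ring

theorem exists_eq_single_of_sum_cube_eq (h : ∑ i, x i = 0)
    (h2 : ∑ i, x i ^ 2 = 2 * s ^ 2 / 3) (h3 : ∑ i, x i ^ 3 = 2 * s ^ 3 / 9) :
    ∃ i, ∀ j, x j = -(s / 3) + (Pi.single i s : Fin 3 → ℝ) j := by
  obtain ⟨i, -, hi⟩ : ∃ i ∈ Finset.univ, x i - 2 * s / 3 = 0 := by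
    -- Newton's identities give `e₂ = -s²/3` and `e₃ = 2s³/27`, so `2s/3` is a root of `∏ (X - xᵢ)`.
    refine Finset.prod_eq_zero_iff.mp ?_
    simp only [Fin.sum_univ_three, Fin.prod_univ_three] at *
    linear_combination (((x 0 + x 1 + x 2) ^ 2 - 3 * (x 0 ^ 2 + x 1 ^ 2 + x 2 ^ 2)) / 6
      - s / 3 * (x 0 + x 1 + x 2) + 4 * s ^ 2 / 9) * h + s / 3 * h2 + 1 / 3 * h3
  have hsq : ∑ j, (x j + s / 3) ^ 2 = (x i + s / 3) ^ 2 := by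
    rw [show x i = 2 * s / 3 by linarith]
    simp only [Fin.sum_univ_three] at *
    linear_combination h2 + 2 * s / 3 * h
  rw [← Finset.add_sum_erase _ _ (Finset.mem_univ i), add_eq_left,
    Finset.sum_eq_zero_iff_of_nonneg (fun _ _ ↦ sq_nonneg _)] at hsq
  refine ⟨i, fun j ↦ ?_⟩
  rcases eq_or_ne j i with rfl | hj
  · simp only [Pi.single_eq_same]; linarith
  · have := pow_eq_zero_iff two_ne_zero |>.mp
      (hsq j (Finset.mem_erase.mpr ⟨hj, Finset.mem_univ j⟩))
    simp only [Pi.single_eq_of_ne hj]; linarith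

end PowerSums

theorem S0_uni (s : ℝ) {n : Fin 3 → ℝ} (hn : unitVec n) : S0 (uni s n) := by
  rw [unitVec, Fin.sum_univ_three] at hn
  constructor
  · refine IsSymm.smul (IsSymm.sub ?_ (isSymm_one.smul _)) s
    simp [IsSymm, transpose_vecMulVec]
  · simp [uni, trace, Fin.sum_univ_three, vecMulVec_apply]
    linear_combination s * hn

theorem nsq_uni (s : ℝ) {n : Fin 3 → ℝ} (hn : unitVec n) : nsq (uni s n) = 2 * s ^ 2 / 3 := by
  rw [unitVec, Fin.sum_univ_three] at hn
  simp [nsq, uni, trace, mul_apply, Fin.sum_univ_three, vecMulVec_apply, one_apply]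
  linear_combination s ^ 2 * (n 0 ^ 2 + n 1 ^ 2 + n 2 ^ 2 + 1 / 3) * hn

theorem tr3_uni (s : ℝ) {n : Fin 3 → ℝ} (hn : unitVec n) : tr3 (uni s n) = 2 * s ^ 3 / 9 := by
  rw [unitVec, Fin.sum_univ_three] at hn
  simp [tr3, uni, trace, mul_apply, Fin.sum_univ_three, vecMulVec_apply, one_apply]
  linear_combination s ^ 3 * ((n 0 ^ 2 + n 1 ^ 2 + n 2 ^ 2) ^ 2 + 1 / 3) * hn

theorem Matrix.IsHermitian.exists_eq_uni {Q : Mat3} (hQ : Q.IsHermitian) {s : ℝ} {i : Fin 3}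
    (h : ∀ j, hQ.eigenvalues j = -(s / 3) + (Pi.single i s : Fin 3 → ℝ) j) :
    ∃ n, unitVec n ∧ Q = uni s n := by
  refine ⟨hQ.eigenvectorBasis i, ?_, ?_⟩
  · have := hQ.eigenvectorBasis.orthonormal.1 i
    rw [EuclideanSpace.norm_eq, Real.sqrt_eq_one] at this
    simpa [unitVec] using this
  · conv_lhs => rw [hQ.eq_smul_one_add_smul_vecMulVec h]
    simp only [uni, star_trivial, RCLike.ofReal_real_eq_id, id]
    module

theorem Matrix.IsHermitian.nsq_eq_sum_eigenvalues_sq {Q : Mat3} (hQ : Q.IsHermitian) :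
    nsq Q = ∑ i, hQ.eigenvalues i ^ 2 := by
  rw [nsq, ← sq, hQ.trace_pow_eq_sum_eigenvalues_pow]
  rfl

theorem Matrix.IsHermitian.tr3_eq_sum_eigenvalues_cube {Q : Mat3} (hQ : Q.IsHermitian) :
    tr3 Q = ∑ i, hQ.eigenvalues i ^ 3 := by
  rw [tr3, ← pow_three', hQ.trace_pow_eq_sum_eigenvalues_pow]
  rfl

/-- The scalar order parameter `s` of `Q`, normalised so that `nsq (uni s n) = 2 s² / 3`. -/
def orderParam (Q : Mat3) : ℝ := √(3 / 2 * nsq Q)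

theorem orderParam_nonneg (Q : Mat3) : 0 ≤ orderParam Q := Real.sqrt_nonneg _

namespace S0

variable {Q : Mat3}

theorem isHermitian (hQ : S0 Q) : Q.IsHermitian := by
  rw [IsHermitian, conjTranspose_eq_transpose_of_trivial]
  exact hQ.1

theorem sum_eigenvalues (hQ : S0 Q) : ∑ i, hQ.isHermitian.eigenvalues i = 0 := by
  simpa using hQ.isHermitian.trace_eq_sum_eigenvalues.symm.trans hQ.2

theorem nsq_eq (hQ : S0 Q) : nsq Q = 2 * orderParam Q ^ 2 / 3 := by
  have : 0 ≤ nsq Q := by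
    rw [hQ.isHermitian.nsq_eq_sum_eigenvalues_sq]; positivity
  rw [orderParam, Real.sq_sqrt (by positivity)]
  ring

theorem tr3_le (hQ : S0 Q) : tr3 Q ≤ 2 * orderParam Q ^ 3 / 9 := by
  rw [hQ.isHermitian.tr3_eq_sum_eigenvalues_cube]
  exact sum_cube_le_of_sum_eq_zero hQ.sum_eigenvalues (orderParam_nonneg Q)
    (hQ.isHermitian.nsq_eq_sum_eigenvalues_sq ▸ hQ.nsq_eq)

theorem exists_eq_uni_of_tr3_eq (hQ : S0 Q) (h : tr3 Q = 2 * orderParam Q ^ 3 / 9) :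
    ∃ n, unitVec n ∧ Q = uni (orderParam Q) n := by
  rw [hQ.isHermitian.tr3_eq_sum_eigenvalues_cube] at h
  obtain ⟨i, hi⟩ := exists_eq_single_of_sum_cube_eq hQ.sum_eigenvalues
    (hQ.isHermitian.nsq_eq_sum_eigenvalues_sq ▸ hQ.nsq_eq) h
  exact hQ.isHermitian.exists_eq_uni hi

end S0

def uniaxialPotential (A B C s : ℝ) : ℝ := A / 3 * s ^ 2 - 2 * B / 27 * s ^ 3 + C / 9 * s ^ 4

theorem fB_uni (A B C s : ℝ) {n : Fin 3 → ℝ} (hn : unitVec n) :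
    fB A B C (uni s n) = uniaxialPotential A B C s := by
  rw [fB, nsq_uni s hn, tr3_uni s hn, uniaxialPotential]
  ring

theorem S0.fB_eq {Q : Mat3} (hQ : S0 Q) (A B C : ℝ) :
    fB A B C Q = uniaxialPotential A B C (orderParam Q)
      + B / 3 * (2 * orderParam Q ^ 3 / 9 - tr3 Q) := by
  rw [fB, hQ.nsq_eq, uniaxialPotential]
  ring

/-- The positive root of `2 C s² - B s + 3 A`, the nonzero critical point of
`uniaxialPotential A B C`. -/
def sPlus (A B C : ℝ) : ℝ := (B + √(B ^ 2 + 24 * |A| * C)) / (4 * C)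

theorem uniaxialPotential_sPlus_lt {A B C s : ℝ} (hA : A < 0) (hB : 0 < B) (hC : 0 < C)
    (hs : 0 ≤ s) (hne : s ≠ sPlus A B C) :
    uniaxialPotential A B C (sPlus A B C) < uniaxialPotential A B C s := by
  set d := √(B ^ 2 + 24 * |A| * C)
  set p := sPlus A B C
  have hpd : p = (B + d) / (4 * C) := rfl
  have hd2 : d ^ 2 = B ^ 2 - 24 * A * C := by
    rw [Real.sq_sqrt (by positivity), abs_of_neg hA]; ring
  have hBd : B < d := by
    nlinarith [Real.sqrt_nonneg (B ^ 2 + 24 * |A| * C), mul_pos (neg_pos.mpr hA) hC]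
  have hp : 0 < p := by rw [hpd]; positivity
  have hroot : 2 * C * p ^ 2 - B * p + 3 * A = 0 := by
    rw [hpd]; field_simp; linear_combination 2 * hd2
  have hBp : B ≤ 3 * C * p := by
    rw [hpd]; field_simp; linarith
  have hq : 0 < 3 * C * s ^ 2 + (6 * C * p - 2 * B) * s + (B * p - 9 * A) / 2 := by
    have : 0 ≤ (6 * C * p - 2 * B) * s := mul_nonneg (by linarith) hs
    nlinarith [mul_pos hB hp]
  have hsp : 0 < (s - p) ^ 2 := by positivity [sub_ne_zero.mpr hne]
  have key : uniaxialPotential A B C s - uniaxialPotential A B C p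
      = ((s - p) ^ 2 * (3 * C * s ^ 2 + (6 * C * p - 2 * B) * s + (B * p - 9 * A) / 2)
        + (2 * C * p ^ 2 - B * p + 3 * A) * (9 / 2 * s ^ 2 - 3 * p * s - 3 / 2 * p ^ 2)) / 27 := by
    simp only [uniaxialPotential]; ring
  rw [hroot, zero_mul, add_zero] at key
  nlinarith [mul_pos hsp hq]

theorem uniaxialPotential_sPlus_le {A B C s : ℝ} (hA : A < 0) (hB : 0 < B) (hC : 0 < C)
    (hs : 0 ≤ s) : uniaxialPotential A B C (sPlus A B C) ≤ uniaxialPotential A B C s := by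
  rcases eq_or_ne s (sPlus A B C) with rfl | hne
  · exact le_rfl
  · exact (uniaxialPotential_sPlus_lt hA hB hC hs hne).le

namespace S0

variable {A B C : ℝ} {Q : Mat3}

theorem uniaxialPotential_sPlus_le_fB (hA : A < 0) (hB : 0 < B) (hC : 0 < C) (hQ : S0 Q) :
    uniaxialPotential A B C (sPlus A B C) ≤ fB A B C Q := by
  have hbiax : 0 ≤ B / 3 * (2 * orderParam Q ^ 3 / 9 - tr3 Q) :=
    mul_nonneg (by positivity) (sub_nonneg.mpr hQ.tr3_le)
  rw [hQ.fB_eq]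
  linarith [uniaxialPotential_sPlus_le hA hB hC (orderParam_nonneg Q)]

theorem exists_eq_uni_sPlus_of_fB_le (hA : A < 0) (hB : 0 < B) (hC : 0 < C) (hQ : S0 Q)
    (h : fB A B C Q ≤ uniaxialPotential A B C (sPlus A B C)) :
    ∃ n, unitVec n ∧ Q = uni (sPlus A B C) n := by
  have hs := orderParam_nonneg Q
  have hbiax : 0 ≤ 2 * orderParam Q ^ 3 / 9 - tr3 Q := sub_nonneg.mpr hQ.tr3_le
  rw [hQ.fB_eq] at h
  have hP : orderParam Q = sPlus A B C := by
    by_contra hne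
    nlinarith [uniaxialPotential_sPlus_lt hA hB hC hs hne]
  have ht : tr3 Q = 2 * orderParam Q ^ 3 / 9 := by
    nlinarith [uniaxialPotential_sPlus_le hA hB hC hs]
  obtain ⟨n, hn, hQn⟩ := hQ.exists_eq_uni_of_tr3_eq ht
  exact ⟨n, hn, hP ▸ hQn⟩

end S0

theorem stmt4 (A B C : ℝ) (hA : A < 0) (hB : 0 < B) (hC : 0 < C) :
    let splus : ℝ := (B + Real.sqrt (B ^ 2 + 24 * |A| * C)) / (4 * C)
    (∃ Q : Mat3, S0 Q ∧ ∀ P : Mat3, S0 P → fB A B C Q ≤ fB A B C P) ∧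
    ∀ Q : Mat3, S0 Q →
      ((∀ P : Mat3, S0 P → fB A B C Q ≤ fB A B C P) ↔
        ∃ n : Fin 3 → ℝ, unitVec n ∧ Q = uni splus n) := by
  intro splus
  have hmin (P : Mat3) (hP : S0 P) : uniaxialPotential A B C splus ≤ fB A B C P :=
    hP.uniaxialPotential_sPlus_le_fB hA hB hC
  have he : unitVec (Pi.single 0 1) := by simp [unitVec, Fin.sum_univ_three]
  refine ⟨⟨uni splus (Pi.single 0 1), S0_uni _ he, fun P hP ↦ ?_⟩, fun Q hQ ↦ ⟨fun h ↦ ?_, ?_⟩⟩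
  · exact (fB_uni A B C splus he).trans_le (hmin P hP)
  · exact hQ.exists_eq_uni_sPlus_of_fB_le hA hB hC
      ((h _ (S0_uni splus he)).trans_eq (fB_uni A B C splus he))
  · rintro ⟨n, hn, rfl⟩ P hP
    exact (fB_uni A B C splus hn).trans_le (hmin P hP)
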